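/- arXiv:1710.02665 — 3 statements merged into one kernel-verified Lean document; each statement's English description precedes it below -/
import Mathlib

section
/- Fix constants b > 0, d > 0, c ∈ ℝ, and a ∈ (0,1). The function f : (0,a] → ℝ defined by f(λ) = λ^b (d ln(1/λ))^{−c} is eventually strictly monotone near 0 and its inverse satisfies f^{−1}(λ) = λ^{1/b} ((d/b) ln(1/λ))^{c/b} (1 + o(1)) as λ → 0⁺. -/
/-!
Below `min 1 (exp (c / b))` the derivative of `f` is a positive multiple of `b ln(1/λ) + c > 0`.
For the inverse, substitute `λ = e^{-t}` and put `k = d / b`, `s = t - c ln(k t)`: the point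
`μ = λ^{1/b} (k t)^{c/b}` satisfies `ln(1/μ) = s / b`, so that `f(μ) / λ = (t / s)^c` exactly,
and `t / s → 1` because `ln(k t) = o(t)`.
-/

open Real Filter Topology Asymptotics Set

theorem tendsto_nhdsGT_zero_iff_exp_neg {α : Type*} {F : ℝ → α} {l : Filter α} :
    Tendsto F (𝓝[>] 0) l ↔ Tendsto (fun t => F (exp (-t))) atTop l := by
  rw [← map_exp_atBot, ← map_neg_atTop, Filter.map_map, tendsto_map'_iff]
  rfl

theorem isLittleO_log_const_mul_atTop {k : ℝ} (hk : 0 < k) :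
    (fun t => log (k * t)) =o[atTop] id :=
  (isLittleO_log_id_atTop.comp_tendsto (tendsto_id.const_mul_atTop hk)).trans_isBigO
    ((isBigO_refl id atTop).const_mul_left k)

theorem tendsto_div_sub_atTop_of_isLittleO {h : ℝ → ℝ} (hh : h =o[atTop] id) :
    Tendsto (fun t => t / (t - h t)) atTop (𝓝 1) := by
  have hq : Tendsto (fun t => 1 - h t / t) atTop (𝓝 1) := by
    simpa using tendsto_const_nhds.sub hh.tendsto_div_nhds_zero
  refine (by simpa using hq.inv₀ one_ne_zero :
    Tendsto (fun t => (1 - h t / t)⁻¹) atTop (𝓝 1)).congr' ?_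
  filter_upwards [eventually_ne_atTop 0] with t ht
  rw [one_sub_div ht, inv_div]

section

variable {b d c : ℝ}

theorem hasDerivAt_rpow_mul_log_one_div_rpow {x : ℝ} (hx : x ≠ 0) (hu : d * log (1 / x) ≠ 0) :
    HasDerivAt (fun y => y ^ b * (d * log (1 / y)) ^ (-c))
      (x ^ (b - 1) * (d * log (1 / x)) ^ (-c - 1) * (d * (b * log (1 / x) + c))) x := by
  obtain ⟨hd, hL⟩ := mul_ne_zero_iff.1 hu
  have hlog : HasDerivAt (fun y => d * log (1 / y)) (-(d * x⁻¹)) x := by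
    have hfun : (fun y => d * log (1 / y)) = fun y => -(d * log y) := by
      funext y
      rw [one_div, log_inv, mul_neg]
    rw [hfun]
    exact ((hasDerivAt_log hx).const_mul d).neg
  refine ((hasDerivAt_rpow_const (Or.inl hx)).mul (hlog.rpow_const (Or.inl hu))).congr_deriv ?_
  rw [rpow_sub_one hx, rpow_sub_one hu]
  field_simp

theorem strictMonoOn_rpow_mul_log_one_div_rpow (hb : 0 < b) (hd : 0 < d) :
    StrictMonoOn (fun y => y ^ b * (d * log (1 / y)) ^ (-c)) (Ioo 0 (min 1 (exp (c / b)))) := by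
  have hsign : ∀ x ∈ Ioo 0 (min 1 (exp (c / b))), 0 < log (1 / x) ∧ 0 < b * log (1 / x) + c := by
    rintro x ⟨hx0, hx⟩
    rw [lt_min_iff] at hx
    have hlog : log x * b < c := (lt_div_iff₀ hb).1 ((log_lt_iff_lt_exp hx0).2 hx.2)
    rw [one_div, log_inv]
    exact ⟨neg_pos.2 (log_neg hx0 hx.1), by linarith⟩
  have hderiv := fun x (hx : x ∈ Ioo 0 (min 1 (exp (c / b)))) =>
    hasDerivAt_rpow_mul_log_one_div_rpow (b := b) (c := c) hx.1.ne'
      (mul_pos hd (hsign x hx).1).ne'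
  refine strictMonoOn_of_hasDerivWithinAt_pos (convex_Ioo _ _)
    (f' := fun x => x ^ (b - 1) * (d * log (1 / x)) ^ (-c - 1) * (d * (b * log (1 / x) + c)))
    (fun x hx => (hderiv x hx).continuousAt.continuousWithinAt) ?_ ?_ <;> rw [interior_Ioo]
  · exact fun x hx => (hderiv x hx).hasDerivWithinAt
  · intro x hx
    obtain ⟨hL, hlin⟩ := hsign x hx
    have hx0 := hx.1
    positivity

theorem rpow_mul_log_rpow_exp_neg_eq (hb : 0 < b) (hd : 0 < d) {t : ℝ} (ht : 0 < t)
    (hs : 0 < t - c * log (d / b * t)) :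
    (exp (-t) ^ (1 / b) * (d / b * t) ^ (c / b)) ^ b *
        (d * log (1 / (exp (-t) ^ (1 / b) * (d / b * t) ^ (c / b)))) ^ (-c) / exp (-t) =
      (t / (t - c * log (d / b * t))) ^ c := by
  set k := d / b with hk_def
  set s := t - c * log (k * t) with hs_def
  have hk : 0 < k := div_pos hd hb
  have hdk : d = k * b := by rw [hk_def, div_mul_cancel₀ _ hb.ne']
  clear_value k s
  have hkt : 0 < k * t := mul_pos hk ht
  have hpow : (exp (-t) ^ (1 / b) * (k * t) ^ (c / b)) ^ b = exp (-t) * (k * t) ^ c := by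
    rw [mul_rpow (by positivity) (by positivity), ← rpow_mul (exp_pos _).le, ← rpow_mul hkt.le,
      one_div_mul_cancel hb.ne', div_mul_cancel₀ _ hb.ne', rpow_one]
  have hlog : d * log (1 / (exp (-t) ^ (1 / b) * (k * t) ^ (c / b))) = k * s := by
    rw [one_div, log_inv, log_mul (by positivity) (by positivity), log_rpow (exp_pos _),
      log_rpow hkt, log_exp, hs_def, hdk]
    field_simp
    ring
  rw [hpow, hlog, mul_rpow hk.le ht.le, mul_rpow hk.le hs.le, div_rpow ht.le hs.le,
    rpow_neg hk.le, rpow_neg hs.le]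
  have hkc : 0 < k ^ c := rpow_pos_of_pos hk c
  have hsc : 0 < s ^ c := rpow_pos_of_pos hs c
  field_simp

theorem tendsto_rpow_mul_log_rpow_div (hb : 0 < b) (hd : 0 < d) :
    Tendsto
      (fun lam => (fun μ => μ ^ b * (d * log (1 / μ)) ^ (-c))
        (lam ^ (1 / b) * ((d / b) * log (1 / lam)) ^ (c / b)) / lam)
      (𝓝[>] 0) (𝓝 1) := by
  rw [tendsto_nhdsGT_zero_iff_exp_neg]
  have hratio := tendsto_div_sub_atTop_of_isLittleO
    ((isLittleO_log_const_mul_atTop (div_pos hd hb)).const_mul_left c)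
  have hpow : Tendsto (fun t => (t / (t - c * log (d / b * t))) ^ c) atTop (𝓝 1) := by
    simpa using hratio.rpow_const (Or.inl one_ne_zero)
  refine hpow.congr' ?_
  filter_upwards [eventually_gt_atTop 0, hratio.eventually (eventually_gt_nhds one_pos)]
    with t ht hpos
  have hs := (div_pos_iff_of_pos_left ht).1 hpos
  have hlog : log (1 / exp (-t)) = t := by rw [one_div, log_inv, log_exp, neg_neg]
  simp only [hlog]
  exact (rpow_mul_log_rpow_exp_neg_eq hb hd ht hs).symm

end

theorem stmt8_general (b d c a : ℝ) (hb : 0 < b) (hd : 0 < d)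
    (ha : 0 < a) :
    (∃ a' : ℝ, 0 < a' ∧ a' ≤ a ∧
      StrictMonoOn (fun lam : ℝ => lam ^ b * (d * Real.log (1 / lam)) ^ (-c))
        (Set.Ioc 0 a')) ∧
    Filter.Tendsto
      (fun lam : ℝ =>
        (fun μ : ℝ => μ ^ b * (d * Real.log (1 / μ)) ^ (-c))
          (lam ^ (1 / b) * ((d / b) * Real.log (1 / lam)) ^ (c / b)) / lam)
      (nhdsWithin 0 (Set.Ioi 0)) (nhds 1) := by
  refine ⟨?_, tendsto_rpow_mul_log_rpow_div hb hd⟩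
  have hm : 0 < min 1 (exp (c / b)) := lt_min one_pos (exp_pos _)
  refine ⟨min a (min 1 (exp (c / b)) / 2), lt_min ha (half_pos hm), min_le_left _ _,
    (strictMonoOn_rpow_mul_log_one_div_rpow hb hd).mono ?_⟩
  exact Ioc_subset_Ioo_right ((min_le_right _ _).trans_lt (half_lt_self hm))

/-- Lemma 4.1 — eventual strict monotonicity near 0 and asymptotics of
the inverse of `f(λ) = λ^b (d ln(1/λ))^{-c}`. -/
theorem stmt8 (b d c a : ℝ) (hb : 0 < b) (hd : 0 < d)
    (ha : 0 < a) (ha1 : a < 1) :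
    (∃ a' : ℝ, 0 < a' ∧ a' ≤ a ∧
      StrictMonoOn (fun lam : ℝ => lam ^ b * (d * Real.log (1 / lam)) ^ (-c))
        (Set.Ioc 0 a')) ∧
    Filter.Tendsto
      (fun lam : ℝ =>
        (fun μ : ℝ => μ ^ b * (d * Real.log (1 / μ)) ^ (-c))
          (lam ^ (1 / b) * ((d / b) * Real.log (1 / lam)) ^ (c / b)) / lam)
      (nhdsWithin 0 (Set.Ioi 0)) (nhds 1) :=
  stmt8_general b d c a hb hd ha
end

section
/- Let b, d > 0, c ∈ ℝ, and define g(λ) = λ^{1/b} ((d/b) ln(1/λ))^{c/b} for small λ > 0. Then f(g(λ))/λ → 1 as λ → 0⁺, where f(μ) = μ^b (d ln(1/μ))^{−c}. -/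
/-!
Put `L = (d/b) ln(1/λ)`, so that `g(λ) = λ^{1/b} L^{c/b}`. Then `g^b = λ L^c` and
`d ln(1/g) = L - (dc/b) ln L`, hence `f(g(λ))/λ = (L / (L - (dc/b) ln L))^c`.
As `λ → 0⁺` we have `L → ∞`, and `ln L = o(L)` sends the base, hence the power, to `1`.
-/

open Filter Real Topology

lemma tendsto_one_sub_mul_log_div_atTop (k : ℝ) :
    Tendsto (fun t : ℝ => 1 - k * (log t / t)) atTop (𝓝 1) := by
  simpa using tendsto_const_nhds.sub (isLittleO_log_id_atTop.tendsto_div_nhds_zero.const_mul k)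

lemma tendsto_sub_mul_log_atTop (k : ℝ) :
    Tendsto (fun t : ℝ => t - k * log t) atTop atTop := by
  refine (tendsto_id.atTop_mul_pos one_pos (tendsto_one_sub_mul_log_div_atTop k)).congr' ?_
  filter_upwards [eventually_ne_atTop 0] with t ht
  simp only [id]
  field_simp

lemma tendsto_div_sub_mul_log_atTop (k : ℝ) :
    Tendsto (fun t : ℝ => t / (t - k * log t)) atTop (𝓝 1) := by
  have h := (tendsto_one_sub_mul_log_div_atTop k).inv₀ one_ne_zero
  rw [inv_one] at h
  refine h.congr' ?_
  filter_upwards [eventually_ne_atTop 0] with t ht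
  field_simp

lemma tendsto_log_one_div_nhdsGT_zero :
    Tendsto (fun x : ℝ => log (1 / x)) (𝓝[>] 0) atTop := by
  simpa only [one_div, log_inv, tendsto_neg_atTop_iff] using tendsto_log_nhdsGT_zero

section

variable {b x y : ℝ}

lemma rpow_one_div_mul_rpow_div_rpow (hb : b ≠ 0) (hx : 0 ≤ x) (hy : 0 ≤ y) (c : ℝ) :
    (x ^ (1 / b) * y ^ (c / b)) ^ b = x * y ^ c := by
  rw [mul_rpow (rpow_nonneg hx _) (rpow_nonneg hy _), ← rpow_mul hx, ← rpow_mul hy,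
    one_div_mul_cancel hb, div_mul_cancel₀ c hb, rpow_one]

lemma mul_log_one_div_rpow_mul_rpow (hx : 0 < x) (hy : 0 < y) (c d : ℝ) :
    d * log (1 / (x ^ (1 / b) * y ^ (c / b))) = d / b * log (1 / x) - d * c / b * log y := by
  rw [one_div, log_inv, log_mul (rpow_pos_of_pos hx _).ne' (rpow_pos_of_pos hy _).ne',
    log_rpow hx, log_rpow hy, one_div x, log_inv]
  ring

end

/-- `f(g(λ))/λ → 1` as `λ → 0⁺`, where
`f(μ) = μ^b (d ln(1/μ))^{-c}` and `g(λ) = λ^{1/b} ((d/b) ln(1/λ))^{c/b}`. -/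
theorem stmt9 (b d c : ℝ) (hb : 0 < b) (hd : 0 < d) :
    Filter.Tendsto
      (fun lam : ℝ =>
        (fun μ : ℝ => μ ^ b * (d * Real.log (1 / μ)) ^ (-c))
          (lam ^ (1 / b) * ((d / b) * Real.log (1 / lam)) ^ (c / b)) / lam)
      (nhdsWithin 0 (Set.Ioi 0)) (nhds 1) := by
  set L : ℝ → ℝ := fun lam => d / b * log (1 / lam)
  have hL : Tendsto L (𝓝[>] 0) atTop :=
    tendsto_log_one_div_nhdsGT_zero.const_mul_atTop (div_pos hd hb)
  have hM := (tendsto_sub_mul_log_atTop (d * c / b)).comp hL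
  have hpow : Tendsto (fun t : ℝ => t ^ c) (𝓝 1) (𝓝 1) := by
    simpa using (continuousAt_rpow_const 1 c (Or.inl one_ne_zero)).tendsto
  refine (hpow.comp ((tendsto_div_sub_mul_log_atTop (d * c / b)).comp hL)).congr' ?_
  filter_upwards [self_mem_nhdsWithin, hL.eventually_gt_atTop 0, hM.eventually_gt_atTop 0]
    with lam (hlam : 0 < lam) hL0 hM0
  simp only [Function.comp_apply] at hM0 ⊢
  rw [rpow_one_div_mul_rpow_div_rpow hb.ne' hlam.le hL0.le, mul_log_one_div_rpow_mul_rpow hlam hL0,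
    div_rpow hL0.le hM0.le, rpow_neg hM0.le]
  field_simp
end

section
/- Let μ(t) = ∫_0^t κ with κ continuous and positive, and define u(x,t) = (1/2)(erf((x+5)/(2√μ(t))) − erf((x−5)/(2√μ(t)))) for t > 0. Then u satisfies ∂_t u = κ(t) ∂_{xx} u on ℝ × (0, T), and u(x,t) → χ_{[−5,5]}(x) pointwise as t → 0⁺ for x ≠ ±5. -/
/-!
With `m = μ(t)`, `u(x, t) = w(x, μ(t))` where `w(x, m) = (erf((x+5)/(2√m)) − erf((x−5)/(2√m)))/2`
is the standard erf solution of `∂_m w = ∂_xx w`: both sides equal a combination of heat kernels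
`exp(−y²/4m)/√(4πm)` at `y = x ± 5`. The chain rule with `μ' = κ` gives the equation for `u`.
As `t → 0⁺`, `μ(t) → 0⁺`, so `(x ± 5)/(2√μ(t)) → ±∞` according to the sign of `x ± 5`,
and `erf(±∞) = ±1` by the Gaussian integral.
-/

open Filter MeasureTheory Set Real Topology

/-- The error function `erf(z) = (2/√π) ∫_0^z e^{-s²} ds`. -/
noncomputable def erf (z : ℝ) : ℝ :=
  (2 / Real.sqrt Real.pi) * ∫ s in (0:ℝ)..z, Real.exp (-s ^ 2)

/-- The candidate solution of Example 5.3. -/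
noncomputable def uErf (κ : ℝ → ℝ) (x t : ℝ) : ℝ :=
  (1 / 2) * (erf ((x + 5) / (2 * Real.sqrt (∫ ν in (0:ℝ)..t, κ ν))) -
             erf ((x - 5) / (2 * Real.sqrt (∫ ν in (0:ℝ)..t, κ ν))))

theorem hasDerivAt_erf (z : ℝ) : HasDerivAt erf (2 / √π * exp (-z ^ 2)) z := by
  have hc : Continuous fun s : ℝ => exp (-s ^ 2) := by fun_prop
  exact (intervalIntegral.integral_hasDerivAt_right (hc.intervalIntegrable _ _)
    (hc.stronglyMeasurableAtFilter _ _) hc.continuousAt).const_mul _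

theorem erf_zero : erf 0 = 0 := by
  simp [erf]

theorem erf_neg (z : ℝ) : erf (-z) = -erf z := by
  have h := intervalIntegral.integral_comp_neg (a := z) (b := 0) fun s => exp (-s ^ 2)
  simp only [neg_sq, neg_zero] at h
  rw [erf, erf, ← h, intervalIntegral.integral_symm]
  ring

theorem tendsto_erf_atTop : Tendsto erf atTop (𝓝 1) := by
  have hint : IntegrableOn (fun s : ℝ => exp (-s ^ 2)) (Ioi 0) := by
    simpa using (integrable_exp_neg_mul_sq one_pos).integrableOn
  have hval : ∫ s in Ioi (0:ℝ), exp (-s ^ 2) = √π / 2 := by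
    simpa using integral_gaussian_Ioi 1
  have h := (intervalIntegral_tendsto_integral_Ioi 0 hint tendsto_id).const_mul (2 / √π)
  have hone : 2 / √π * (√π / 2) = 1 := by
    field_simp [(sqrt_pos.mpr pi_pos).ne']
  rwa [hval, hone] at h

theorem tendsto_erf_div_two_sqrt_nhdsGT_zero (c : ℝ) :
    Tendsto (fun m => erf (c / (2 * √m))) (𝓝[>] 0) (𝓝 (Real.sign c)) := by
  have htop : ∀ {c : ℝ}, 0 < c → Tendsto (fun m => erf (c / (2 * √m))) (𝓝[>] 0) (𝓝 1) := by
    intro c hc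
    have hsqrt : Tendsto (fun m => 2 * √m) (𝓝[>] 0) (𝓝[>] 0) := by
      refine tendsto_nhdsWithin_iff.mpr ⟨?_, ?_⟩
      · simpa using ((continuous_sqrt.tendsto 0).const_mul 2).mono_left nhdsWithin_le_nhds
      · filter_upwards [self_mem_nhdsWithin] with m hm
        exact mul_pos two_pos (sqrt_pos.mpr hm)
    refine tendsto_erf_atTop.comp ?_
    simpa [div_eq_mul_inv] using hsqrt.inv_tendsto_nhdsGT_zero.const_mul_atTop hc
  rcases lt_trichotomy c 0 with hc | rfl | hc
  · rw [Real.sign_of_neg hc]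
    simpa [neg_div, erf_neg] using (htop (neg_pos.mpr hc)).neg
  · simp [Real.sign_zero, erf_zero]
  · rw [Real.sign_of_pos hc]
    exact htop hc

noncomputable def heatKernel (m x : ℝ) : ℝ :=
  exp (-(x / (2 * √m)) ^ 2) / (2 * √π * √m)

section HeatKernel

variable {m : ℝ}

theorem hasDerivAt_erf_div_two_sqrt (hm : 0 < m) (x : ℝ) :
    HasDerivAt (fun y => erf (y / (2 * √m))) (2 * heatKernel m x) x := by
  have h := (hasDerivAt_erf (x / (2 * √m))).comp x ((hasDerivAt_id x).div_const (2 * √m))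
  refine h.congr_deriv ?_
  have hpos := sqrt_pos.mpr hm
  simp only [heatKernel]
  field_simp

theorem hasDerivAt_heatKernel (hm : 0 < m) (x : ℝ) :
    HasDerivAt (heatKernel m) (-(x / (2 * m)) * heatKernel m x) x := by
  have h := ((((hasDerivAt_id x).div_const (2 * √m)).pow 2).neg.exp).div_const (2 * √π * √m)
  refine h.congr_deriv ?_
  have hpos := sqrt_pos.mpr hm
  have hsq := sq_sqrt hm.le
  simp only [heatKernel, Pi.neg_apply, Pi.pow_apply, id, Nat.cast_ofNat, Nat.add_one_sub_one,
    pow_one]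
  field_simp
  rw [hsq]

theorem hasDerivAt_erf_const_div_two_sqrt (hm : 0 < m) (x : ℝ) :
    HasDerivAt (fun s => erf (x / (2 * √s))) (-(x / m) * heatKernel m x) m := by
  have hsqrt := (hasDerivAt_sqrt hm.ne').const_mul 2
  have hpos := sqrt_pos.mpr hm
  have h := (hasDerivAt_erf (x / (2 * √m))).comp m
    ((hasDerivAt_const m x).div hsqrt (by positivity))
  refine h.congr_deriv ?_
  have hsq := sq_sqrt hm.le
  simp only [heatKernel]
  field_simp
  rw [hsq]
  ring

/-- The solution of `∂_m w = ∂_xx w` with initial value the indicator of `[-a, a]`. -/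
noncomputable def erfPulse (a m x : ℝ) : ℝ :=
  1 / 2 * (erf ((x + a) / (2 * √m)) - erf ((x - a) / (2 * √m)))

theorem hasDerivAt_erfPulse (hm : 0 < m) (a x : ℝ) :
    HasDerivAt (erfPulse a m) (heatKernel m (x + a) - heatKernel m (x - a)) x := by
  have h := (((hasDerivAt_erf_div_two_sqrt hm (x + a)).comp_add_const x a).sub
    ((hasDerivAt_erf_div_two_sqrt hm (x - a)).comp_sub_const x a)).const_mul (1 / 2)
  exact h.congr_deriv (by ring)

theorem hasDerivAt_deriv_erfPulse (hm : 0 < m) (a x : ℝ) :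
    HasDerivAt (deriv (erfPulse a m))
      (-((x + a) / (2 * m)) * heatKernel m (x + a) + (x - a) / (2 * m) * heatKernel m (x - a))
      x := by
  have h := ((hasDerivAt_heatKernel hm (x + a)).comp_add_const x a).sub
    ((hasDerivAt_heatKernel hm (x - a)).comp_sub_const x a)
  rw [funext fun y => (hasDerivAt_erfPulse hm a y).deriv]
  exact h.congr_deriv (by ring)

theorem erfPulse_heat_equation (hm : 0 < m) (a x : ℝ) :
    HasDerivAt (fun s => erfPulse a s x) (deriv (deriv (erfPulse a m)) x) m := by
  have h := ((hasDerivAt_erf_const_div_two_sqrt hm (x + a)).sub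
    (hasDerivAt_erf_const_div_two_sqrt hm (x - a))).const_mul (1 / 2)
  rw [(hasDerivAt_deriv_erfPulse hm a x).deriv]
  exact h.congr_deriv (by ring)

end HeatKernel

theorem tendsto_erfPulse_nhdsGT_zero (a x : ℝ) :
    Tendsto (fun m => erfPulse a m x) (𝓝[>] 0)
      (𝓝 ((Real.sign (x + a) - Real.sign (x - a)) / 2)) := by
  have h := ((tendsto_erf_div_two_sqrt_nhdsGT_zero (x + a)).sub
    (tendsto_erf_div_two_sqrt_nhdsGT_zero (x - a))).const_mul (1 / 2)
  simpa only [erfPulse, one_div_mul_eq_div] using h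

theorem sign_add_sub_sign_sub_div_two_eq_indicator {a x : ℝ} (ha : 0 ≤ a) (hxa : x ≠ a)
    (hxna : x ≠ -a) :
    (Real.sign (x + a) - Real.sign (x - a)) / 2 = (Icc (-a) a).indicator (fun _ => 1) x := by
  rcases lt_or_gt_of_ne hxna with hx | hx
  · rw [Real.sign_of_neg (by linarith), Real.sign_of_neg (by linarith),
      indicator_of_notMem (fun h => (h.1.trans_lt hx).false)]
    norm_num
  rcases lt_or_gt_of_ne hxa with hx' | hx'
  · rw [Real.sign_of_pos (by linarith), Real.sign_of_neg (by linarith),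
      indicator_of_mem (show x ∈ Icc (-a) a from ⟨hx.le, hx'.le⟩)]
    norm_num
  · rw [Real.sign_of_pos (by linarith), Real.sign_of_pos (by linarith),
      indicator_of_notMem (fun h => (h.2.trans_lt hx').false)]
    norm_num

section Primitive

variable {κ : ℝ → ℝ} {T : ℝ}

theorem intervalIntegral_pos_of_pos_on_Icc (hκ : Continuous κ) (hκpos : ∀ ν ∈ Icc 0 T, 0 < κ ν)
    {t : ℝ} (ht : t ∈ Ioc 0 T) : 0 < ∫ ν in 0..t, κ ν :=
  intervalIntegral.intervalIntegral_pos_of_pos_on (hκ.intervalIntegrable _ _)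
    (fun ν hν => hκpos ν ⟨hν.1.le, hν.2.le.trans ht.2⟩) ht.1

theorem tendsto_intervalIntegral_nhdsGT_zero (hT : 0 < T) (hκ : Continuous κ)
    (hκpos : ∀ ν ∈ Icc 0 T, 0 < κ ν) :
    Tendsto (fun t => ∫ ν in 0..t, κ ν) (𝓝[>] 0) (𝓝[>] 0) := by
  refine tendsto_nhdsWithin_iff.mpr ⟨?_, ?_⟩
  · have hcont : Continuous fun t => ∫ ν in 0..t, κ ν :=
      intervalIntegral.continuous_primitive (fun a b => hκ.intervalIntegrable a b) 0
    simpa using (hcont.tendsto 0).mono_left nhdsWithin_le_nhds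
  · filter_upwards [Ioc_mem_nhdsGT hT] with t ht
    exact intervalIntegral_pos_of_pos_on_Icc hκ hκpos ht

end Primitive

/-- the erf-based function solves the heat equation on `ℝ × (0,T)` and
converges pointwise to the indicator of `[-5,5]` as `t → 0⁺` (for `x ≠ ±5`). -/
theorem stmt17 (T : ℝ) (hT : 0 < T) (κ : ℝ → ℝ) (hκ : Continuous κ)
    (hκpos : ∀ ν ∈ Set.Icc 0 T, 0 < κ ν) :
    (∀ x : ℝ, ∀ t ∈ Set.Ioo 0 T,
      HasDerivAt (fun τ : ℝ => uErf κ x τ)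
        (κ t * deriv (deriv (fun ξ : ℝ => uErf κ ξ t)) x) t) ∧
    (∀ x : ℝ, x ≠ 5 → x ≠ -5 →
      Filter.Tendsto (fun t : ℝ => uErf κ x t) (nhdsWithin 0 (Set.Ioi 0))
        (nhds (Set.indicator (Set.Icc (-5 : ℝ) 5) (fun _ => (1 : ℝ)) x))) := by
  refine ⟨fun x t ht => ?_, fun x hx hx' => ?_⟩
  · have hμ : HasDerivAt (fun τ => ∫ ν in 0..τ, κ ν) (κ t) t :=
      intervalIntegral.integral_hasDerivAt_right (hκ.intervalIntegrable _ _)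
        (hκ.stronglyMeasurableAtFilter _ _) hκ.continuousAt
    have hm := intervalIntegral_pos_of_pos_on_Icc hκ hκpos (Ioo_subset_Ioc_self ht)
    have h := (erfPulse_heat_equation hm 5 x).comp t hμ
    rw [mul_comm]
    exact h
  · rw [← sign_add_sub_sign_sub_div_two_eq_indicator (by norm_num) hx hx']
    exact (tendsto_erfPulse_nhdsGT_zero 5 x).comp
      (tendsto_intervalIntegral_nhdsGT_zero hT hκ hκpos)
end
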